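/- Let i, k ∈ I with a_{ik} = −1, and for each m ∈ ℤ set F_m := (v^{1/2}E_{k,m}E_{i,m} − v^{−1/2}E_{i,m}E_{k,m})/(v − v^{−1}) in 𝒜. Then for every m ∈ ℤ one has F_{m+1}F_m = v²F_m F_{m+1} + (1 − v²)K_{i,m}K_{k,m}. (This is the verification that σ_k preserves relation (SD4) in the case j = i.) -/
import Mathlib


/-!
Braid group action on the twisted semi-derived Hall algebra (Contu, arXiv:2410.18604).

We work with the algebra `𝒜 = 𝒮𝒟ℋ_tw(C^b(𝒫))` given by its presentation
(Proposition `prop_presenentation_semiderived_E_i` of the paper): generators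
`E_{i,m}`, `K_{i,m}`, `K_{i,m}⁻¹` (`i ∈ I`, `m ∈ ℤ`) over `F = ℚ(v^{1/2})`,
subject to the relations (SD0)–(SD5).
-/

noncomputable section

namespace SDHall

/-- The field `ℚ(v^{1/2})` of rational functions over `ℚ` in one indeterminate `v^{1/2}`. -/
abbrev F₀ : Type := RatFunc ℚ

/-- The indeterminate `v^{1/2}`. -/
def sq : F₀ := RatFunc.X

/-- `v := (v^{1/2})²`. -/
def v : F₀ := sq ^ 2

/-- The sign `(-1)^n` for an integer `n`. -/
def sgn (n : ℤ) : ℤ := (((-1 : ℤˣ) ^ n : ℤˣ) : ℤ)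

/-- Generators `E_{i,m}`, `K_{i,m}`, `K_{i,m}⁻¹` of the presented algebra. -/
inductive Gen (I : Type) : Type
  | E : I → ℤ → Gen I
  | K : I → ℤ → Gen I
  | Kinv : I → ℤ → Gen I

variable {I : Type}

def e (i : I) (m : ℤ) : FreeAlgebra F₀ (Gen I) := FreeAlgebra.ι F₀ (Gen.E i m)
def κ (i : I) (m : ℤ) : FreeAlgebra F₀ (Gen I) := FreeAlgebra.ι F₀ (Gen.K i m)
def κ' (i : I) (m : ℤ) : FreeAlgebra F₀ (Gen I) := FreeAlgebra.ι F₀ (Gen.Kinv i m)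

/-- The defining relations (SD0)–(SD5) of the twisted semi-derived Hall algebra:
(SD0) `K_{i,m}K_{i,m}⁻¹ = 1 = K_{i,m}⁻¹K_{i,m}`;
(SD1) each `K_{i,m}` is central;
(SD2) `E_{i,m}E_{j,m} = E_{j,m}E_{i,m}` if `a_{ij} = 0`;
(SD3) `E_{i,m}²E_{j,m} − (v+v⁻¹)E_{i,m}E_{j,m}E_{i,m} + E_{j,m}E_{i,m}² = 0` if `a_{ij} = −1`;
(SD4) `E_{i,m+1}E_{j,m} = v^{a_{ij}}E_{j,m}E_{i,m+1} + δ_{ij}(1−v²)K_{i,m}`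
      (split into the cases `i ≠ j` and `i = j`);
(SD5) `E_{j,r}E_{i,l} = v^{−(−1)^{r−l}a_{ij}}E_{i,l}E_{j,r}` for `r > l+1`. -/
inductive Rel (a : I → I → ℤ) : FreeAlgebra F₀ (Gen I) → FreeAlgebra F₀ (Gen I) → Prop
  | sd0a (i : I) (m : ℤ) : Rel a (κ i m * κ' i m) 1
  | sd0b (i : I) (m : ℤ) : Rel a (κ' i m * κ i m) 1
  | sd1 (i : I) (m : ℤ) (x : FreeAlgebra F₀ (Gen I)) : Rel a (κ i m * x) (x * κ i m)
  | sd2 (i j : I) (m : ℤ) : a i j = 0 → Rel a (e i m * e j m) (e j m * e i m)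
  | sd3 (i j : I) (m : ℤ) : a i j = -1 →
      Rel a (e i m ^ 2 * e j m - (v + v⁻¹) • (e i m * e j m * e i m) + e j m * e i m ^ 2) 0
  | sd4_ne (i j : I) (m : ℤ) : i ≠ j →
      Rel a (e i (m + 1) * e j m) ((v ^ (a i j)) • (e j m * e i (m + 1)))
  | sd4_eq (i : I) (m : ℤ) :
      Rel a (e i (m + 1) * e i m)
        ((v ^ (a i i)) • (e i m * e i (m + 1)) + ((1 : F₀) - v ^ 2) • κ i m)
  | sd5 (i j : I) (r l : ℤ) : r > l + 1 →
      Rel a (e j r * e i l) ((v ^ (-(sgn (r - l)) * a i j)) • (e i l * e j r))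

/-- The twisted semi-derived Hall algebra `𝒜`, presented by generators and relations. -/
abbrev A (a : I → I → ℤ) : Type := RingQuot (Rel a)

/-- The generator `E_{i,m}` of `𝒜`. -/
def E (a : I → I → ℤ) (i : I) (m : ℤ) : A a := RingQuot.mkAlgHom F₀ (Rel a) (e i m)

/-- The generator `K_{i,m}` of `𝒜`. -/
def K (a : I → I → ℤ) (i : I) (m : ℤ) : A a := RingQuot.mkAlgHom F₀ (Rel a) (κ i m)

/-- The generator `K_{i,m}⁻¹` of `𝒜`. -/
def Kinv (a : I → I → ℤ) (i : I) (m : ℤ) : A a := RingQuot.mkAlgHom F₀ (Rel a) (κ' i m)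

/-- `a` is a simply-laced generalized Cartan matrix: symmetric, `a_{ii} = 2`,
and `a_{ij} ∈ {0, −1}` for `i ≠ j`. -/
def IsCartan (a : I → I → ℤ) : Prop :=
  (∀ i j, a i j = a j i) ∧ (∀ i, a i i = 2) ∧ ∀ i j, i ≠ j → a i j = 0 ∨ a i j = -1

/-- The element `(v^{1/2}E_{i,m}E_{j,m} − v^{−1/2}E_{j,m}E_{i,m})/(v − v^{−1})` of `𝒜`. -/
def T (a : I → I → ℤ) (i j : I) (m : ℤ) : A a :=
  (v - v⁻¹)⁻¹ • (sq • (E a i m * E a j m) - sq⁻¹ • (E a j m * E a i m))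

/-- The defining formulas for the braid group operator `σᵢ` on the generators:
`σᵢ(E_{i,m}) = E_{i,m+1}K_{i,m}⁻¹`;
`σᵢ(E_{j,m}) = (v^{1/2}E_{i,m}E_{j,m} − v^{−1/2}E_{j,m}E_{i,m})/(v − v^{−1})` if `a_{ij} = −1`;
`σᵢ(E_{j,m}) = E_{j,m}` if `a_{ij} = 0`;
`σᵢ(K_{i,m}) = K_{i,m}⁻¹`; `σᵢ(K_{j,m}) = K_{i,m}K_{j,m}` if `a_{ij} = −1`;
`σᵢ(K_{j,m}) = K_{j,m}` if `a_{ij} = 0`. -/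
def SigmaSpec (a : I → I → ℤ) (i : I) (σ : A a →ₐ[F₀] A a) : Prop :=
  (∀ m : ℤ, σ (E a i m) = E a i (m + 1) * Kinv a i m) ∧
  (∀ (j : I) (m : ℤ), a i j = -1 → σ (E a j m) = T a i j m) ∧
  (∀ (j : I) (m : ℤ), a i j = 0 → σ (E a j m) = E a j m) ∧
  (∀ m : ℤ, σ (K a i m) = Kinv a i m) ∧
  (∀ (j : I) (m : ℤ), a i j = -1 → σ (K a j m) = K a i m * K a j m) ∧
  (∀ (j : I) (m : ℤ), a i j = 0 → σ (K a j m) = K a j m)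

/-- The defining formulas for the inverse operator `σᵢ'` on the generators:
`σᵢ'(E_{i,m}) = E_{i,m−1}K_{i,m−1}⁻¹`;
`σᵢ'(E_{j,m}) = (v^{1/2}E_{j,m}E_{i,m} − v^{−1/2}E_{i,m}E_{j,m})/(v − v^{−1})` if `a_{ij} = −1`;
`σᵢ'(E_{j,m}) = E_{j,m}` if `a_{ij} = 0`;
`σᵢ'(K_{i,m}) = K_{i,m}⁻¹`; `σᵢ'(K_{j,m}) = K_{i,m}K_{j,m}` if `a_{ij} = −1`;
`σᵢ'(K_{j,m}) = K_{j,m}` if `a_{ij} = 0`. -/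
def SigmaSpec' (a : I → I → ℤ) (i : I) (σ : A a →ₐ[F₀] A a) : Prop :=
  (∀ m : ℤ, σ (E a i m) = E a i (m - 1) * Kinv a i (m - 1)) ∧
  (∀ (j : I) (m : ℤ), a i j = -1 → σ (E a j m) = T a j i m) ∧
  (∀ (j : I) (m : ℤ), a i j = 0 → σ (E a j m) = E a j m) ∧
  (∀ m : ℤ, σ (K a i m) = Kinv a i m) ∧
  (∀ (j : I) (m : ℤ), a i j = -1 → σ (K a j m) = K a i m * K a j m) ∧
  (∀ (j : I) (m : ℤ), a i j = 0 → σ (K a j m) = K a j m)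

end SDHall

open SDHall

section Aux

lemma sq_ne_zero : (sq : F₀) ≠ 0 := RatFunc.X_ne_zero

lemma v_ne_zero : (v : F₀) ≠ 0 := pow_ne_zero _ sq_ne_zero

lemma v_sq_sub_one_ne_zero : (v : F₀) ^ 2 - 1 ≠ 0 := by
  intro h
  have h4 : (RatFunc.X : F₀) ^ 4 = 1 := by
    have : (v : F₀) ^ 2 = 1 := by linear_combination h
    unfold v SDHall.sq at this
    rw [← pow_mul] at this
    simpa using this
  have : (algebraMap (Polynomial ℚ) (RatFunc ℚ)) (Polynomial.X ^ 4) =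
      (algebraMap (Polynomial ℚ) (RatFunc ℚ)) 1 := by
    simpa [map_pow, RatFunc.algebraMap_X] using h4
  have hX : (Polynomial.X : Polynomial ℚ) ^ 4 = 1 := RatFunc.algebraMap_injective ℚ this
  have := congrArg Polynomial.natDegree hX
  simp [Polynomial.natDegree_X_pow] at this

lemma c_eq : ((v : F₀) - v⁻¹)⁻¹ = v / (v ^ 2 - 1) := by
  rw [show (v : F₀) - v⁻¹ = (v ^ 2 - 1) / v by field_simp [v_ne_zero]]
  rw [inv_div]

lemma K_central {I : Type} (a : I → I → ℤ) (j : I) (n : ℤ) (x : A a) :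
    K a j n * x = x * K a j n := by
  obtain ⟨y, rfl⟩ := RingQuot.mkAlgHom_surjective F₀ (Rel a) x
  rw [K, ← map_mul, ← map_mul]
  exact RingQuot.mkAlgHom_rel F₀ (Rel.sd1 j n y)

lemma rel_ne {I : Type} (a : I → I → ℤ) (i j : I) (h : i ≠ j) (n : ℤ) :
    E a i (n + 1) * E a j n = (v ^ (a i j)) • (E a j n * E a i (n + 1)) := by
  have := RingQuot.mkAlgHom_rel F₀ (Rel.sd4_ne (a := a) i j n h)
  simpa [E, map_mul, map_smul] using this

lemma rel_eq {I : Type} (a : I → I → ℤ) (j : I) (n : ℤ) :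
    E a j (n + 1) * E a j n
      = (v ^ (a j j)) • (E a j n * E a j (n + 1)) + ((1 : F₀) - v ^ 2) • K a j n := by
  have := RingQuot.mkAlgHom_rel F₀ (Rel.sd4_eq (a := a) j n)
  simpa [E, K, map_mul, map_smul, map_add] using this

end Aux

lemma v_sub_inv_ne_zero : (v : F₀) - v⁻¹ ≠ 0 := by
  have h : (v : F₀) - v⁻¹ = (v ^ 2 - 1) / v := by
    field_simp [v_ne_zero]
  rw [h]
  exact div_ne_zero v_sq_sub_one_ne_zero v_ne_zero

set_option maxHeartbeats 4000000 in
set_option synthInstance.maxHeartbeats 1000000 in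
attribute [-instance] RatFunc.instAlgebraOfPolynomial in
/-- The key computation: the `(v − v⁻¹)⁻¹`-free version of the identity. -/
lemma key_computation {I : Type} (a : I → I → ℤ) (i k : I)
    (hii : a i i = 2) (hkk : a k k = 2) (hik : a i k = -1) (hki : a k i = -1)
    (hne : i ≠ k) (m : ℤ) :
    (sq • (E a k (m + 1) * E a i (m + 1)) - sq⁻¹ • (E a i (m + 1) * E a k (m + 1))) *
        (sq • (E a k m * E a i m) - sq⁻¹ • (E a i m * E a k m))
      = (v ^ 2) • ((sq • (E a k m * E a i m) - sq⁻¹ • (E a i m * E a k m)) *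
          (sq • (E a k (m + 1) * E a i (m + 1)) - sq⁻¹ • (E a i (m + 1) * E a k (m + 1))))
        + ((((v : F₀) - v⁻¹) ^ 2) * ((1 : F₀) - v ^ 2)) • (K a i m * K a k m) := by
  set X := E a i m with hXdef
  set Y := E a k m with hYdef
  set X' := E a i (m + 1) with hX'def
  set Y' := E a k (m + 1) with hY'def
  set Ki := K a i m with hKidef
  set Kk := K a k m with hKkdef
  have hz2 : (v : F₀) ^ (2 : ℤ) = v ^ 2 := by
    rw [show ((2 : ℤ)) = ((2 : ℕ) : ℤ) by norm_num, zpow_natCast]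
  have h1 : X' * Y = v⁻¹ • (Y * X') := by
    have h := rel_ne a i k hne m
    rwa [hik, zpow_neg_one] at h
  have h2 : Y' * X = v⁻¹ • (X * Y') := by
    have h := rel_ne a k i hne.symm m
    rwa [hki, zpow_neg_one] at h
  have h3 : X' * X = (v ^ 2) • (X * X') + ((1 : F₀) - v ^ 2) • Ki := by
    have h := rel_eq a i m
    rwa [hii, hz2] at h
  have h4 : Y' * Y = (v ^ 2) • (Y * Y') + ((1 : F₀) - v ^ 2) • Kk := by
    have h := rel_eq a k m
    rwa [hkk, hz2] at h
  have h1t : ∀ z : A a, X' * (Y * z) = v⁻¹ • (Y * (X' * z)) := by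
    intro z; rw [← mul_assoc, h1, smul_mul_assoc, mul_assoc]
  have h2t : ∀ z : A a, Y' * (X * z) = v⁻¹ • (X * (Y' * z)) := by
    intro z; rw [← mul_assoc, h2, smul_mul_assoc, mul_assoc]
  have h3t : ∀ z : A a, X' * (X * z)
      = (v ^ 2) • (X * (X' * z)) + ((1 : F₀) - v ^ 2) • (Ki * z) := by
    intro z; rw [← mul_assoc, h3, add_mul, smul_mul_assoc, smul_mul_assoc, mul_assoc]
  have h4t : ∀ z : A a, Y' * (Y * z)
      = (v ^ 2) • (Y * (Y' * z)) + ((1 : F₀) - v ^ 2) • (Kk * z) := by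
    intro z; rw [← mul_assoc, h4, add_mul, smul_mul_assoc, smul_mul_assoc, mul_assoc]
  have hKi : ∀ t : A a, Ki * t = t * Ki := fun t => K_central a i m t
  have hKk : ∀ t : A a, Kk * t = t * Kk := fun t => K_central a k m t
  have swap : ∀ (u : A a), (∀ t : A a, u * t = t * u) →
      ∀ (w z : A a), w * (u * z) = u * (w * z) := by
    intro u hu w z; rw [← mul_assoc, ← hu, mul_assoc]
  simp only [smul_sub, sub_mul, mul_sub, smul_mul_assoc, mul_smul_comm, smul_smul,
    smul_add, add_mul, mul_add, mul_assoc, h1, h1t, h2, h2t, h3, h3t, h4, h4t,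
    swap Ki hKi X, swap Ki hKi Y, swap Ki hKi X', swap Ki hKi Y', swap Ki hKi Kk,
    swap Kk hKk X, swap Kk hKk Y, swap Kk hKk X', swap Kk hKk Y',
    (hKi X).symm, (hKi Y).symm, (hKi X').symm, (hKi Y').symm, (hKi Kk).symm,
    (hKk X).symm, (hKk Y).symm, (hKk X').symm, (hKk Y').symm]
  match_scalars <;>
    · unfold v
      field_simp [sq_ne_zero]
      try ring

set_option maxHeartbeats 1000000 in
set_option synthInstance.maxHeartbeats 1000000 in
attribute [-instance] RatFunc.instAlgebraOfPolynomial in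
/-- For `a_{ik} = −1`, set
`F_m := (v^{1/2}E_{k,m}E_{i,m} − v^{−1/2}E_{i,m}E_{k,m})/(v − v^{−1})` for each `m ∈ ℤ`.
Then `F_{m+1}F_m = v²F_mF_{m+1} + (1 − v²)K_{i,m}K_{k,m}` in `𝒜` for every `m`.
(Verification that `σ_k` preserves (SD4) in the case `j = i`.) -/
theorem sd4_preserved_diagonal (I : Type) [Fintype I] (a : I → I → ℤ)
    (hA : IsCartan a) (i k : I) (hik : a i k = -1) :
    ∀ m : ℤ, T a k i (m + 1) * T a k i m
      = (v ^ 2) • (T a k i m * T a k i (m + 1))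
        + ((1 : F₀) - v ^ 2) • (K a i m * K a k m) := by
  obtain ⟨hsym, hdiag, _⟩ := hA
  have hki : a k i = -1 := by rw [hsym]; exact hik
  have hne : i ≠ k := by
    intro h
    rw [h, hdiag] at hik
    omega
  intro m
  have key := key_computation a i k (hdiag i) (hdiag k) hik hki hne m
  simp only [T]
  rw [smul_mul_assoc, mul_smul_comm, smul_smul, key, smul_mul_assoc, mul_smul_comm, smul_smul]
  match_scalars
  · ring
  · have h1 : ((v : F₀) - v⁻¹)⁻¹ * ((v : F₀) - v⁻¹) = 1 := inv_mul_cancel₀ v_sub_inv_ne_zero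
    linear_combination (((v : F₀) - v⁻¹)⁻¹ * ((v : F₀) - v⁻¹) + 1) *
      ((1 : F₀) - v ^ 2) * h1
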